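/- In the n-state, n-letter NFA described (Δ(q_n,a_n)=∅; Δ(q_i,a_i)={q_{i+1},…,q_n} for i<n; Δ(q_i,a_j)=Q for j<i; Δ(q_i,a_j)={q_i} for i<j), the word w₁ defined recursively by w_n = a_n and w_i = w_{i+1} a_i w_{i+1} for 1 ≤ i ≤ n-1 is a mortal word of length 2^n - 1. -/

import Mathlib

/-! Write `T_j` for the states of index at least `n - j`, so that `counterWord n j` only uses
letters `a_k` with `k ≥ n - j`. By induction on `j`, the word `counterWord n j` sends every
subset of `T_j` to `∅`. For `j + 1`, with middle letter `a = a_{n-j-1}`: the first copy of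
`counterWord n j` kills the part of `S` inside `T_j` and fixes the state `a` (every letter
is larger than `a`), so it leaves at most `{a}`; the letter `a` sends `a` into `T_j`; the
second copy then kills everything. -/

/-- The action of an NFA with transition function `Δ` on a set of states,
extended homomorphically to words. -/
def wordImage {Q σ : Type*} (Δ : Q → σ → Set Q) : Set Q → List σ → Set Q
  | S, [] => S
  | S, a :: w => wordImage Δ (⋃ q ∈ S, Δ q a) w

/-- The `(n+1)`-state, `(n+1)`-letter counter NFA: state `i` is `q_{i+1}` and
letter `j` is `a_{j+1}` (0-based). `Δ(q_i, a_i) = {q_{i+1}, …}` for `i` not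
last, `Δ(q_last, a_last) = ∅`, `Δ(q_i, a_j) = Q` for `j < i`, and
`Δ(q_i, a_j) = {q_i}` for `i < j`. -/
def ctrDelta (n : ℕ) : Fin (n + 1) → Fin (n + 1) → Set (Fin (n + 1)) := fun i j =>
  if i = j then (if i = Fin.last n then ∅ else {h | i < h})
  else if j < i then Set.univ else {i}

/-- `counterWord n j` is the word `w_{n+1-j}` of the paper (over the
`(n+1)`-letter alphabet): `w_last = a_last` and `w_i = w_{i+1} a_i w_{i+1}`. -/
def counterWord (n : ℕ) : ℕ → List (Fin (n + 1))
  | 0 => [Fin.last n]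
  | j + 1 => counterWord n j ++ [Fin.last n - (Fin.ofNat (n + 1) (j + 1 : ℕ))] ++ counterWord n j

section wordImage

variable {Q σ : Type*} (Δ : Q → σ → Set Q)

lemma wordImage_singleton_letter (S : Set Q) (a : σ) :
    wordImage Δ S [a] = ⋃ q ∈ S, Δ q a := rfl

lemma wordImage_mono {S T : Set Q} (h : S ⊆ T) (w : List σ) :
    wordImage Δ S w ⊆ wordImage Δ T w := by
  induction w generalizing S T with
  | nil => exact h
  | cons a w ih => exact ih (Set.biUnion_subset_biUnion_left h)

lemma wordImage_eq_empty_of_subset {S T : Set Q} (h : S ⊆ T) {w : List σ}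
    (hT : wordImage Δ T w = ∅) : wordImage Δ S w = ∅ :=
  Set.subset_empty_iff.mp (hT ▸ wordImage_mono Δ h w)

lemma wordImage_union (S T : Set Q) (w : List σ) :
    wordImage Δ (S ∪ T) w = wordImage Δ S w ∪ wordImage Δ T w := by
  induction w generalizing S T with
  | nil => rfl
  | cons a w ih => simp only [wordImage, Set.biUnion_union, ih]

lemma wordImage_append (S : Set Q) (u v : List σ) :
    wordImage Δ S (u ++ v) = wordImage Δ (wordImage Δ S u) v := by
  induction u generalizing S with
  | nil => rfl
  | cons a u ih => exact ih _

end wordImage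

section ctrDelta

variable {n : ℕ}

lemma ctrDelta_of_lt {i j : Fin (n + 1)} (h : i < j) : ctrDelta n i j = {i} := by
  rw [ctrDelta, if_neg h.ne, if_neg h.not_gt]

lemma ctrDelta_self {i : Fin (n + 1)} (h : i ≠ Fin.last n) : ctrDelta n i i = Set.Ioi i := by
  rw [ctrDelta, if_pos rfl, if_neg h]
  rfl

lemma ctrDelta_last_last : ctrDelta n (Fin.last n) (Fin.last n) = ∅ := by
  simp [ctrDelta]

lemma wordImage_ctrDelta_singleton {a : Fin (n + 1)} {w : List (Fin (n + 1))}
    (hw : ∀ b ∈ w, a < b) : wordImage (ctrDelta n) {a} w = {a} := by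
  induction w with
  | nil => rfl
  | cons b w ih =>
    simp only [wordImage, Set.biUnion_singleton, ctrDelta_of_lt (hw b List.mem_cons_self)]
    exact ih fun c hc => hw c (List.mem_cons_of_mem _ hc)

end ctrDelta

section counterWord

variable {n : ℕ}

lemma val_last_sub_ofNat {j : ℕ} (hj : j ≤ n) :
    (Fin.last n - Fin.ofNat (n + 1) j).val = n - j := by
  rw [Fin.last_sub, Fin.val_rev, Fin.val_ofNat, Nat.mod_eq_of_lt (by omega)]
  omega

lemma le_val_of_mem_counterWord {j : ℕ} (hj : j ≤ n) {b : Fin (n + 1)}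
    (hb : b ∈ counterWord n j) : n - j ≤ b.val := by
  induction j with
  | zero => simp_all [counterWord]
  | succ j ih =>
    simp only [counterWord, List.mem_append, List.mem_singleton] at hb
    rcases hb with (hb | rfl) | hb
    · exact (ih (by omega) hb).trans' (by omega)
    · exact (val_last_sub_ofNat hj).ge
    · exact (ih (by omega) hb).trans' (by omega)

lemma wordImage_counterWord_eq_empty {j : ℕ} (hj : j ≤ n) {S : Set (Fin (n + 1))}
    (hS : ∀ q ∈ S, n - j ≤ q.val) : wordImage (ctrDelta n) S (counterWord n j) = ∅ := by
  induction j generalizing S with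
  | zero =>
    have hS : S ⊆ {Fin.last n} := fun q hq => Fin.ext (by have := hS q hq; simp; omega)
    refine wordImage_eq_empty_of_subset _ hS ?_
    simp [counterWord, wordImage, ctrDelta_last_last]
  | succ j ih =>
    set a : Fin (n + 1) := Fin.last n - Fin.ofNat (n + 1) (j + 1)
    have ha : a.val = n - (j + 1) := val_last_sub_ofNat hj
    have hkill : wordImage (ctrDelta n) {q | n - j ≤ q.val} (counterWord n j) = ∅ :=
      ih (by omega) fun _ hq => hq
    have hsplit : S ⊆ {a} ∪ {q | n - j ≤ q.val} := fun q hq => by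
      by_cases hqa : q = a
      · exact Or.inl hqa
      · have : q.val ≠ a.val := Fin.val_ne_of_ne hqa
        have := hS q hq
        exact Or.inr (by simp only [Set.mem_ofPred_eq]; omega)
    have hfirst : wordImage (ctrDelta n) S (counterWord n j) ⊆ {a} := by
      calc wordImage (ctrDelta n) S (counterWord n j)
          ⊆ wordImage (ctrDelta n) ({a} ∪ {q | n - j ≤ q.val}) (counterWord n j) :=
            wordImage_mono _ hsplit _
        _ = {a} := by
          rw [wordImage_union, hkill, Set.union_empty, wordImage_ctrDelta_singleton]
          intro b hb
          have := le_val_of_mem_counterWord (by omega) hb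
          rw [Fin.lt_def]
          omega
    have hmiddle : wordImage (ctrDelta n) {a} [a] ⊆ {q | n - j ≤ q.val} := by
      have hane : a ≠ Fin.last n := fun h => by
        have := congrArg Fin.val h
        simp only [ha, Fin.val_last] at this
        omega
      rw [wordImage_singleton_letter, Set.biUnion_singleton, ctrDelta_self hane]
      intro q hq
      have : a.val < q.val := hq
      simp only [Set.mem_ofPred_eq]
      omega
    rw [counterWord, wordImage_append, wordImage_append]
    exact wordImage_eq_empty_of_subset _
      ((wordImage_mono _ hfirst _).trans hmiddle) hkill

lemma length_counterWord_add_one (j : ℕ) : (counterWord n j).length + 1 = 2 ^ (j + 1) := by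
  induction j with
  | zero => rfl
  | succ j ih =>
    simp only [counterWord, List.length_append, List.length_singleton]
    rw [pow_succ]
    omega

end counterWord

/-- The word `w₁ = counterWord n n` is a mortal word for the counter NFA of
length `2 ^ (n + 1) - 1`. -/
theorem stmt6 (n : ℕ) :
    wordImage (ctrDelta n) Set.univ (counterWord n n) = ∅ ∧
      (counterWord n n).length = 2 ^ (n + 1) - 1 :=
  ⟨wordImage_counterWord_eq_empty le_rfl fun _ _ => by omega,
    by have := length_counterWord_add_one (n := n) n; omega⟩
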